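/- Let A ∈ ℝ^{n×n}, B ∈ ℝ^{n×m}, K ∈ ℝ^{m×n}, K̄ ∈ ℝ^{m×q} (q = n + m), and let Ā, P, Ē ∈ ℝ^{q×q} with P symmetric positive definite and Ē invertible, Q ∈ ℝ^{n×n} symmetric positive definite, C̄ ∈ ℝ^{p×q}, N₁ ∈ ℝ^{q×p}, N₂ ∈ ℝ^{q×q}, B̄_f ∈ ℝ^{q×m}, C_ω ∈ ℝ^{p×p}, H₁ ∈ ℝ^{m×p}, H₂ ∈ ℝ^{p×p}, H₃ ∈ ℝ^{p×q}. Set L = Ē P⁻¹ N₁ and 𝓛 = Ē P⁻¹ N₂, and assume: (i) the symmetric block matrix Ξ = [[Ξ₁₁, Ξ₁₂, Ξ₁₃],[Ξ₁₂ᵀ, Ξ₂₂, Ξ₂₃],[Ξ₁₃ᵀ, Ξ₂₃ᵀ, Ξ₃₃]] is negative definite, where Ξ₁₁ = Q(A+BK) + (A+BK)ᵀQ, Ξ₁₂ = Ξ₁₃ = −Q B K̄, Ξ₂₂ = P Ē⁻¹ Ā + (P Ē⁻¹ Ā)ᵀ − N₁ C̄ − C̄ᵀ N₁ᵀ, Ξ₂₃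 = (N₁ C̄)ᵀ, Ξ₃₃ = P Ē⁻¹ Ā + (P Ē⁻¹ Ā)ᵀ − N₂ − N₂ᵀ; (ii) (H₁ C̄)ᵀ = P Ē⁻¹ B̄_f, (H₂ C̄)ᵀ = P Ē⁻¹ L C_ω, and H₃ᵀ = P Ē⁻¹ L C_ω. Let ρ = c + η with c ≥ 0, η ≥ 0, and ω̄ ≥ 0. Let x : ℝ → ℝ^n and ē, ε̄ : ℝ → ℝ^q be differentiable, and let d̄ : ℝ → ℝ^m, ω : ℝ → ℝ^p satisfy |d̄(t)_i| ≤ c and |ω(t)_j| ≤ ω̄ for all t, i, j. Suppose for all t: x′(t) = (A+BK)x(t) − B K̄ ē(t) − B K̄ ε̄(t); Ē ē′(t) = (Ā − L C̄) ē(t) + L C_ω(−ω̄·sgn(H₂ C̄ ē(t)) − ω(t)) + B̄_f(d̄(t) − ρ·sgn(H₁ C̄ ē(t))); and Ē ε̄′(t) = (Ā − 𝓛) ε̄(t) + L C̄ ē(t) + L C_ω(ω(t) − ω̄·sgn(H₃ ε̄(t))). Then V(t) = x(t)ᵀ Q x(t) + ē(t)ᵀ P ē(t) + ε̄(t)ᵀ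 P ε̄(t) is differentiable with V′(t) ≤ 0 for every t, and V′(t) < 0 whenever (x(t), ē(t), ε̄(t)) ≠ (0, 0, 0). -/

import Mathlib

/-! Along trajectories, `V̇ = 2 xᵀQẋ + 2 ēᵀPē̇ + 2 ε̄ᵀPε̄̇`. Multiplying the observer
equations by `PĒ⁻¹` turns `PĒ⁻¹L` and `PĒ⁻¹𝓛` into `N₁` and `N₂`, and the matching
conditions (ii) turn the terms carrying `B̄_f` and `L C_ω` into `sᵀ(v − r·sgn s)` with
`s = H₁C̄ē, H₂C̄ē, H₃ε̄`. Each of these is `≤ 0` because the switching gain `r` dominates the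
bound on `v`, so `V̇ ≤ ξᵀΞξ` with `ξ = (x, ē, ε̄)`, and negative definiteness of `Ξ`
concludes. -/

open Matrix

/-- Componentwise sign vector: `(sgn s) i = 1` if `s i > 0`, `-1` if `s i < 0`, `0` otherwise. -/
noncomputable def sgn {k : Type*} (s : k → ℝ) : k → ℝ := fun i => Real.sign (s i)

theorem Real.mul_sign_self (x : ℝ) : x * Real.sign x = |x| := by
  rcases lt_trichotomy x 0 with h | rfl | h
  · rw [Real.sign_of_neg h, abs_of_neg h, mul_neg_one]
  · simp
  · rw [Real.sign_of_pos h, abs_of_pos h, mul_one]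

section SlidingMode

variable {k : Type*} [Fintype k]

theorem dotProduct_sgn_self (s : k → ℝ) : s ⬝ᵥ sgn s = ∑ i, |s i| := by
  simp only [dotProduct, sgn, Real.mul_sign_self]

theorem dotProduct_sub_smul_sgn_nonpos {s v : k → ℝ} {b r : ℝ} (hv : ∀ i, |v i| ≤ b)
    (hbr : b ≤ r) : s ⬝ᵥ (v - r • sgn s) ≤ 0 := by
  have hsv : s ⬝ᵥ v ≤ ∑ i, |s i| * b := Finset.sum_le_sum fun i _ =>
    calc s i * v i ≤ |s i| * |v i| := (le_abs_self _).trans (abs_mul _ _).le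
      _ ≤ |s i| * b := mul_le_mul_of_nonneg_left (hv i) (abs_nonneg _)
  rw [← Finset.sum_mul] at hsv
  rw [dotProduct_sub, dotProduct_smul, dotProduct_sgn_self, smul_eq_mul]
  nlinarith [Finset.sum_nonneg fun i (_ : i ∈ Finset.univ) => abs_nonneg (s i)]

end SlidingMode

section QuadraticForms

variable {k l : Type*} [Fintype k] [Fintype l]

theorem two_mul_dotProduct_mulVec_self (M : Matrix k k ℝ) (a : k → ℝ) :
    2 * (a ⬝ᵥ M *ᵥ a) = a ⬝ᵥ (M + Mᵀ) *ᵥ a := by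
  rw [add_mulVec, dotProduct_add, dotProduct_transpose_mulVec]; ring

theorem sumElim_dotProduct_fromBlocks_mulVec_sumElim
    (M₁₁ : Matrix k k ℝ) (M₁₂ : Matrix k l ℝ) (M₂₁ : Matrix l k ℝ) (M₂₂ : Matrix l l ℝ)
    (a : k → ℝ) (b : l → ℝ) :
    Sum.elim a b ⬝ᵥ fromBlocks M₁₁ M₁₂ M₂₁ M₂₂ *ᵥ Sum.elim a b =
      a ⬝ᵥ M₁₁ *ᵥ a + a ⬝ᵥ M₁₂ *ᵥ b + b ⬝ᵥ M₂₁ *ᵥ a + b ⬝ᵥ M₂₂ *ᵥ b := by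
  rw [fromBlocks_mulVec, sumElim_dotProduct_sumElim, dotProduct_add, dotProduct_add]
  simp only [Sum.elim_comp_inl, Sum.elim_comp_inr]
  ring

theorem sumElim_dotProduct_symmBlocks₃_mulVec_sumElim {j : Type*} [Fintype j]
    (M₁₁ : Matrix k k ℝ) (M₁₂ : Matrix k l ℝ) (M₁₃ : Matrix k j ℝ) (M₂₂ : Matrix l l ℝ)
    (M₂₃ : Matrix l j ℝ) (M₃₃ : Matrix j j ℝ) (a : k → ℝ) (b : l → ℝ) (c : j → ℝ) :
    Sum.elim a (Sum.elim b c) ⬝ᵥ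
        fromBlocks M₁₁ (fromCols M₁₂ M₁₃) (fromRows M₁₂ᵀ M₁₃ᵀ) (fromBlocks M₂₂ M₂₃ M₂₃ᵀ M₃₃) *ᵥ
          Sum.elim a (Sum.elim b c) =
      a ⬝ᵥ M₁₁ *ᵥ a + 2 * (a ⬝ᵥ M₁₂ *ᵥ b) + 2 * (a ⬝ᵥ M₁₃ *ᵥ c)
        + b ⬝ᵥ M₂₂ *ᵥ b + 2 * (b ⬝ᵥ M₂₃ *ᵥ c) + c ⬝ᵥ M₃₃ *ᵥ c := by
  rw [sumElim_dotProduct_fromBlocks_mulVec_sumElim, sumElim_dotProduct_fromBlocks_mulVec_sumElim,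
    fromCols_mulVec_sumElim, fromRows_mulVec, sumElim_dotProduct_sumElim, dotProduct_add]
  simp only [dotProduct_transpose_mulVec]
  ring

theorem HasDerivAt.dotProduct_mulVec_self {M : Matrix k k ℝ} (hM : Mᵀ = M) {f : ℝ → k → ℝ}
    {f' : k → ℝ} {t : ℝ} (hf : HasDerivAt f f' t) :
    HasDerivAt (fun t => f t ⬝ᵥ M *ᵥ f t) (2 * (f t ⬝ᵥ M *ᵥ f')) t := by
  have hMf : HasDerivAt (fun t => M *ᵥ f t) (M *ᵥ f') t :=
    (LinearMap.toContinuousLinearMap M.mulVecLin).hasFDerivAt.comp_hasDerivAt t hf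
  have h := HasDerivAt.fun_sum (u := Finset.univ) fun i _ =>
    (hasDerivAt_pi.mp hf i).mul (hasDerivAt_pi.mp hMf i)
  refine h.congr_deriv ?_
  rw [Finset.sum_add_distrib]
  change f' ⬝ᵥ M *ᵥ f t + f t ⬝ᵥ M *ᵥ f' = _
  rw [← dotProduct_transpose_mulVec, hM]
  ring

theorem dotProduct_mulVec_eq_of_mulVec_eq [DecidableEq k] {E P : Matrix k k ℝ}
    (hE : IsUnit E.det) {v w : k → ℝ} (h : E *ᵥ v = w) (a : k → ℝ) : a ⬝ᵥ P *ᵥ v = a ⬝ᵥ (P * E⁻¹) *ᵥ w := by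
  rw [← h, mulVec_mulVec, Matrix.mul_assoc, nonsing_inv_mul _ hE, Matrix.mul_one]

end QuadraticForms

theorem Matrix.isUnit_det_of_dotProduct_mulVec_pos {k : Type*} [Fintype k] [DecidableEq k]
    {P : Matrix k k ℝ} (hP : Pᵀ = P) (hpos : ∀ x : k → ℝ, x ≠ 0 → 0 < x ⬝ᵥ P *ᵥ x) :
    IsUnit P.det :=
  P.isUnit_iff_isUnit_det.mp (PosDef.of_dotProduct_mulVec_pos (by simpa [IsHermitian] using hP)
    (by simpa using hpos)).isUnit

namespace SMOCascade

variable {n m p q : Type*} [Fintype n] [Fintype m] [Fintype p] [Fintype q]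

theorem state_term_eq {A Q : Matrix n n ℝ} {B : Matrix n m ℝ} {K : Matrix m n ℝ}
    {Kbar : Matrix m q ℝ} (hQ : Qᵀ = Q) {x x' : n → ℝ} {e ε : q → ℝ}
    (hx' : x' = (A + B * K) *ᵥ x - (B * Kbar) *ᵥ e - (B * Kbar) *ᵥ ε) :
    2 * (x ⬝ᵥ Q *ᵥ x') = x ⬝ᵥ (Q * (A + B * K) + (A + B * K)ᵀ * Q) *ᵥ x
      + 2 * (x ⬝ᵥ (-(Q * B * Kbar)) *ᵥ e) + 2 * (x ⬝ᵥ (-(Q * B * Kbar)) *ᵥ ε) := by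
  have hsymm := two_mul_dotProduct_mulVec_self (Q * (A + B * K)) x
  rw [transpose_mul, hQ] at hsymm
  rw [← hsymm, hx']
  simp only [mulVec_sub, dotProduct_sub, mulVec_mulVec, neg_mulVec, dotProduct_neg,
    Matrix.mul_assoc]
  ring

variable [DecidableEq q] {Abar P E : Matrix q q ℝ} {C : Matrix p q ℝ} {L : Matrix q p ℝ}
  {N₁ : Matrix q p ℝ} {Cω : Matrix p p ℝ}

theorem smo_error_term_le {Bf : Matrix q m ℝ} {H₁ : Matrix m p ℝ} {H₂ : Matrix p p ℝ}
    (hE : IsUnit E.det) (hL : P * E⁻¹ * L = N₁) (hH₁ : (H₁ * C)ᵀ = P * E⁻¹ * Bf)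
    (hH₂ : (H₂ * C)ᵀ = P * E⁻¹ * L * Cω) {c ρ ωb : ℝ} (hcρ : c ≤ ρ) {d : m → ℝ}
    {w : p → ℝ} (hd : ∀ i, |d i| ≤ c) (hw : ∀ j, |w j| ≤ ωb) {e e' : q → ℝ}
    (he' : E *ᵥ e' = (Abar - L * C) *ᵥ e + (L * Cω) *ᵥ (-(ωb • sgn ((H₂ * C) *ᵥ e)) - w)
      + Bf *ᵥ (d - ρ • sgn ((H₁ * C) *ᵥ e))) :
    2 * (e ⬝ᵥ P *ᵥ e') ≤
      e ⬝ᵥ (P * E⁻¹ * Abar + (P * E⁻¹ * Abar)ᵀ - N₁ * C - Cᵀ * N₁ᵀ) *ᵥ e := by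
  have hdisturbance := dotProduct_sub_smul_sgn_nonpos (s := (H₁ * C) *ᵥ e) hd hcρ
  have hnoise := dotProduct_sub_smul_sgn_nonpos (s := (H₂ * C) *ᵥ e) (v := -w)
    (by simpa using hw) le_rfl
  have hsymm : 2 * (e ⬝ᵥ (P * E⁻¹ * Abar - N₁ * C) *ᵥ e) =
      e ⬝ᵥ (P * E⁻¹ * Abar + (P * E⁻¹ * Abar)ᵀ - N₁ * C - Cᵀ * N₁ᵀ) *ᵥ e := by
    rw [two_mul_dotProduct_mulVec_self, transpose_sub, transpose_mul N₁]
    congr 2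
    abel
  rw [dotProduct_mulVec_eq_of_mulVec_eq hE he', mulVec_add, mulVec_add, dotProduct_add,
    dotProduct_add, mulVec_mulVec, mulVec_mulVec, mulVec_mulVec, Matrix.mul_sub,
    ← Matrix.mul_assoc _ L, hL, ← Matrix.mul_assoc _ L, ← hH₂, ← hH₁,
    dotProduct_transpose_mulVec, dotProduct_transpose_mulVec,
    dotProduct_comm _ ((H₂ * C) *ᵥ e), dotProduct_comm _ ((H₁ * C) *ᵥ e), neg_sub_comm]
  linarith

theorem cascade_error_term_le {Lc N₂ : Matrix q q ℝ} {H₃ : Matrix p q ℝ}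
    (hE : IsUnit E.det) (hL : P * E⁻¹ * L = N₁) (hLc : P * E⁻¹ * Lc = N₂)
    (hH₃ : H₃ᵀ = P * E⁻¹ * L * Cω) {ωb : ℝ} {w : p → ℝ} (hw : ∀ j, |w j| ≤ ωb)
    {e ε ε' : q → ℝ}
    (hε' : E *ᵥ ε' = (Abar - Lc) *ᵥ ε + (L * C) *ᵥ e + (L * Cω) *ᵥ (w - ωb • sgn (H₃ *ᵥ ε))) :
    2 * (ε ⬝ᵥ P *ᵥ ε') ≤ ε ⬝ᵥ (P * E⁻¹ * Abar + (P * E⁻¹ * Abar)ᵀ - N₂ - N₂ᵀ) *ᵥ ε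
      + 2 * (e ⬝ᵥ (N₁ * C)ᵀ *ᵥ ε) := by
  have hnoise := dotProduct_sub_smul_sgn_nonpos (s := H₃ *ᵥ ε) hw le_rfl
  have hsymm : 2 * (ε ⬝ᵥ (P * E⁻¹ * Abar - N₂) *ᵥ ε) =
      ε ⬝ᵥ (P * E⁻¹ * Abar + (P * E⁻¹ * Abar)ᵀ - N₂ - N₂ᵀ) *ᵥ ε := by
    rw [two_mul_dotProduct_mulVec_self, transpose_sub]
    congr 2
    abel
  rw [dotProduct_mulVec_eq_of_mulVec_eq hE hε', mulVec_add, mulVec_add, dotProduct_add,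
    dotProduct_add, mulVec_mulVec, mulVec_mulVec, mulVec_mulVec, Matrix.mul_sub, hLc,
    ← Matrix.mul_assoc _ L, hL, ← Matrix.mul_assoc _ L, ← hH₃,
    dotProduct_transpose_mulVec, dotProduct_transpose_mulVec,
    dotProduct_comm _ (H₃ *ᵥ ε)]
  linarith

end SMOCascade

theorem stmt9_general {n m p : ℕ}
    (A : Matrix (Fin n) (Fin n) ℝ) (B : Matrix (Fin n) (Fin m) ℝ)
    (K : Matrix (Fin m) (Fin n) ℝ) (Kbar : Matrix (Fin m) (Fin n ⊕ Fin m) ℝ)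
    (Abar P E : Matrix (Fin n ⊕ Fin m) (Fin n ⊕ Fin m) ℝ)
    (hPsymm : Pᵀ = P)
    (hPpos : ∀ x : Fin n ⊕ Fin m → ℝ, x ≠ 0 → 0 < x ⬝ᵥ P.mulVec x)
    (hE : IsUnit E.det)
    (Q : Matrix (Fin n) (Fin n) ℝ)
    (hQsymm : Qᵀ = Q)
    (C : Matrix (Fin p) (Fin n ⊕ Fin m) ℝ)
    (N₁ : Matrix (Fin n ⊕ Fin m) (Fin p) ℝ)
    (N₂ : Matrix (Fin n ⊕ Fin m) (Fin n ⊕ Fin m) ℝ)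
    (Bfbar : Matrix (Fin n ⊕ Fin m) (Fin m) ℝ) (Cω : Matrix (Fin p) (Fin p) ℝ)
    (H₁ : Matrix (Fin m) (Fin p) ℝ) (H₂ : Matrix (Fin p) (Fin p) ℝ)
    (H₃ : Matrix (Fin p) (Fin n ⊕ Fin m) ℝ)
    (L : Matrix (Fin n ⊕ Fin m) (Fin p) ℝ) (hL : L = E * P⁻¹ * N₁)
    (Lc : Matrix (Fin n ⊕ Fin m) (Fin n ⊕ Fin m) ℝ) (hLc : Lc = E * P⁻¹ * N₂)
    (Ξ : Matrix ((Fin n) ⊕ ((Fin n ⊕ Fin m) ⊕ (Fin n ⊕ Fin m)))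
                ((Fin n) ⊕ ((Fin n ⊕ Fin m) ⊕ (Fin n ⊕ Fin m))) ℝ)
    (hΞ : Ξ = fromBlocks
      (Q * (A + B * K) + (A + B * K)ᵀ * Q)
      (fromCols (-(Q * B * Kbar)) (-(Q * B * Kbar)))
      (fromRows (-(Q * B * Kbar))ᵀ (-(Q * B * Kbar))ᵀ)
      (fromBlocks
        (P * E⁻¹ * Abar + (P * E⁻¹ * Abar)ᵀ - N₁ * C - Cᵀ * N₁ᵀ)
        ((N₁ * C)ᵀ)
        ((N₁ * C)ᵀ)ᵀ
        (P * E⁻¹ * Abar + (P * E⁻¹ * Abar)ᵀ - N₂ - N₂ᵀ)))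
    (hNegDef : ∀ ξ : (Fin n) ⊕ ((Fin n ⊕ Fin m) ⊕ (Fin n ⊕ Fin m)) → ℝ,
      ξ ≠ 0 → ξ ⬝ᵥ Ξ.mulVec ξ < 0)
    (hH₁ : (H₁ * C)ᵀ = P * E⁻¹ * Bfbar)
    (hH₂ : (H₂ * C)ᵀ = P * E⁻¹ * L * Cω)
    (hH₃ : H₃ᵀ = P * E⁻¹ * L * Cω)
    (c η ρ ωb : ℝ) (hη : 0 ≤ η) (hρ : ρ = c + η)
    (x : ℝ → Fin n → ℝ) (hx : Differentiable ℝ x)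
    (e ε : ℝ → Fin n ⊕ Fin m → ℝ) (he : Differentiable ℝ e) (hε : Differentiable ℝ ε)
    (d : ℝ → Fin m → ℝ) (ω : ℝ → Fin p → ℝ)
    (hd : ∀ t i, |d t i| ≤ c) (hω : ∀ t j, |ω t j| ≤ ωb)
    (hxdyn : ∀ t, deriv x t =
      (A + B * K).mulVec (x t) - (B * Kbar).mulVec (e t) - (B * Kbar).mulVec (ε t))
    (hedyn : ∀ t, E.mulVec (deriv e t) =
      (Abar - L * C).mulVec (e t)
        + (L * Cω).mulVec (-(ωb • sgn ((H₂ * C).mulVec (e t))) - ω t)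
        + Bfbar.mulVec (d t - ρ • sgn ((H₁ * C).mulVec (e t))))
    (hεdyn : ∀ t, E.mulVec (deriv ε t) =
      (Abar - Lc).mulVec (ε t) + (L * C).mulVec (e t)
        + (L * Cω).mulVec (ω t - ωb • sgn (H₃.mulVec (ε t)))) :
    Differentiable ℝ (fun t =>
        x t ⬝ᵥ Q.mulVec (x t) + e t ⬝ᵥ P.mulVec (e t) + ε t ⬝ᵥ P.mulVec (ε t)) ∧
      (∀ t, deriv (fun t =>
        x t ⬝ᵥ Q.mulVec (x t) + e t ⬝ᵥ P.mulVec (e t) + ε t ⬝ᵥ P.mulVec (ε t)) t ≤ 0) ∧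
      (∀ t, (x t, e t, ε t) ≠ (0, 0, 0) →
        deriv (fun t =>
          x t ⬝ᵥ Q.mulVec (x t) + e t ⬝ᵥ P.mulVec (e t) + ε t ⬝ᵥ P.mulVec (ε t)) t < 0) := by
  have hP : IsUnit P.det := isUnit_det_of_dotProduct_mulVec_pos hPsymm hPpos
  have hcancel : ∀ {j : Type} (N : Matrix (Fin n ⊕ Fin m) j ℝ), P * E⁻¹ * (E * P⁻¹ * N) = N :=
    fun N => by
      rw [Matrix.mul_assoc, ← Matrix.mul_assoc E⁻¹, ← Matrix.mul_assoc E⁻¹, nonsing_inv_mul _ hE,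
        Matrix.one_mul, mul_nonsing_inv_cancel_left _ _ hP]
  have hV : ∀ t, HasDerivAt (fun t =>
      x t ⬝ᵥ Q.mulVec (x t) + e t ⬝ᵥ P.mulVec (e t) + ε t ⬝ᵥ P.mulVec (ε t))
      (2 * (x t ⬝ᵥ Q *ᵥ deriv x t) + 2 * (e t ⬝ᵥ P *ᵥ deriv e t)
        + 2 * (ε t ⬝ᵥ P *ᵥ deriv ε t)) t := fun t =>
    (((hx t).hasDerivAt.dotProduct_mulVec_self hQsymm).add
      ((he t).hasDerivAt.dotProduct_mulVec_self hPsymm)).add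
      ((hε t).hasDerivAt.dotProduct_mulVec_self hPsymm)
  have hbound : ∀ t, deriv (fun t =>
      x t ⬝ᵥ Q.mulVec (x t) + e t ⬝ᵥ P.mulVec (e t) + ε t ⬝ᵥ P.mulVec (ε t)) t ≤
      Sum.elim (x t) (Sum.elim (e t) (ε t)) ⬝ᵥ Ξ *ᵥ Sum.elim (x t) (Sum.elim (e t) (ε t)) := by
    intro t
    rw [(hV t).deriv, hΞ, sumElim_dotProduct_symmBlocks₃_mulVec_sumElim]
    linarith [SMOCascade.state_term_eq hQsymm (hxdyn t),
      SMOCascade.smo_error_term_le hE (hL ▸ hcancel N₁) hH₁ hH₂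
        (hρ ▸ le_add_of_nonneg_right hη) (hd t) (hω t) (hedyn t),
      SMOCascade.cascade_error_term_le hE (hL ▸ hcancel N₁) (hLc ▸ hcancel N₂) hH₃ (hω t)
        (hεdyn t)]
  refine ⟨fun t => (hV t).differentiableAt, fun t => (hbound t).trans ?_,
    fun t ht => (hbound t).trans_lt (hNegDef _ ?_)⟩
  · obtain hξ | hξ := eq_or_ne (Sum.elim (x t) (Sum.elim (e t) (ε t))) 0
    · simp [hξ]
    · exact (hNegDef _ hξ).le
  · simpa [funext_iff, Sum.forall] using ht

/-- Theorem 4 of the paper: stability of the closed-loop system under the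
SMO-CO based compensation controller `u = K̄ x̃̄`.  The augmented dimension `q = n + m` is
modelled by the index type `Fin n ⊕ Fin m`; the 3×3 block matrix `Ξ` is built with nested
`fromBlocks`. -/
theorem stmt9 {n m p : ℕ}
    (A : Matrix (Fin n) (Fin n) ℝ) (B : Matrix (Fin n) (Fin m) ℝ)
    (K : Matrix (Fin m) (Fin n) ℝ) (Kbar : Matrix (Fin m) (Fin n ⊕ Fin m) ℝ)
    (Abar P E : Matrix (Fin n ⊕ Fin m) (Fin n ⊕ Fin m) ℝ)
    (hPsymm : Pᵀ = P)
    (hPpos : ∀ x : Fin n ⊕ Fin m → ℝ, x ≠ 0 → 0 < x ⬝ᵥ P.mulVec x)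
    (hE : IsUnit E.det)
    (Q : Matrix (Fin n) (Fin n) ℝ)
    (hQsymm : Qᵀ = Q) (hQpos : ∀ x : Fin n → ℝ, x ≠ 0 → 0 < x ⬝ᵥ Q.mulVec x)
    (C : Matrix (Fin p) (Fin n ⊕ Fin m) ℝ)
    (N₁ : Matrix (Fin n ⊕ Fin m) (Fin p) ℝ)
    (N₂ : Matrix (Fin n ⊕ Fin m) (Fin n ⊕ Fin m) ℝ)
    (Bfbar : Matrix (Fin n ⊕ Fin m) (Fin m) ℝ) (Cω : Matrix (Fin p) (Fin p) ℝ)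
    (H₁ : Matrix (Fin m) (Fin p) ℝ) (H₂ : Matrix (Fin p) (Fin p) ℝ)
    (H₃ : Matrix (Fin p) (Fin n ⊕ Fin m) ℝ)
    (L : Matrix (Fin n ⊕ Fin m) (Fin p) ℝ) (hL : L = E * P⁻¹ * N₁)
    (Lc : Matrix (Fin n ⊕ Fin m) (Fin n ⊕ Fin m) ℝ) (hLc : Lc = E * P⁻¹ * N₂)
    (Ξ : Matrix ((Fin n) ⊕ ((Fin n ⊕ Fin m) ⊕ (Fin n ⊕ Fin m)))
                ((Fin n) ⊕ ((Fin n ⊕ Fin m) ⊕ (Fin n ⊕ Fin m))) ℝ)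
    (hΞ : Ξ = fromBlocks
      (Q * (A + B * K) + (A + B * K)ᵀ * Q)
      (fromCols (-(Q * B * Kbar)) (-(Q * B * Kbar)))
      (fromRows (-(Q * B * Kbar))ᵀ (-(Q * B * Kbar))ᵀ)
      (fromBlocks
        (P * E⁻¹ * Abar + (P * E⁻¹ * Abar)ᵀ - N₁ * C - Cᵀ * N₁ᵀ)
        ((N₁ * C)ᵀ)
        ((N₁ * C)ᵀ)ᵀ
        (P * E⁻¹ * Abar + (P * E⁻¹ * Abar)ᵀ - N₂ - N₂ᵀ)))
    (hNegDef : ∀ ξ : (Fin n) ⊕ ((Fin n ⊕ Fin m) ⊕ (Fin n ⊕ Fin m)) → ℝ,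
      ξ ≠ 0 → ξ ⬝ᵥ Ξ.mulVec ξ < 0)
    (hH₁ : (H₁ * C)ᵀ = P * E⁻¹ * Bfbar)
    (hH₂ : (H₂ * C)ᵀ = P * E⁻¹ * L * Cω)
    (hH₃ : H₃ᵀ = P * E⁻¹ * L * Cω)
    (c η ρ ωb : ℝ) (hc : 0 ≤ c) (hη : 0 ≤ η) (hρ : ρ = c + η) (hωb : 0 ≤ ωb)
    (x : ℝ → Fin n → ℝ) (hx : Differentiable ℝ x)
    (e ε : ℝ → Fin n ⊕ Fin m → ℝ) (he : Differentiable ℝ e) (hε : Differentiable ℝ ε)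
    (d : ℝ → Fin m → ℝ) (ω : ℝ → Fin p → ℝ)
    (hd : ∀ t i, |d t i| ≤ c) (hω : ∀ t j, |ω t j| ≤ ωb)
    (hxdyn : ∀ t, deriv x t =
      (A + B * K).mulVec (x t) - (B * Kbar).mulVec (e t) - (B * Kbar).mulVec (ε t))
    (hedyn : ∀ t, E.mulVec (deriv e t) =
      (Abar - L * C).mulVec (e t)
        + (L * Cω).mulVec (-(ωb • sgn ((H₂ * C).mulVec (e t))) - ω t)
        + Bfbar.mulVec (d t - ρ • sgn ((H₁ * C).mulVec (e t))))
    (hεdyn : ∀ t, E.mulVec (deriv ε t) =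
      (Abar - Lc).mulVec (ε t) + (L * C).mulVec (e t)
        + (L * Cω).mulVec (ω t - ωb • sgn (H₃.mulVec (ε t)))) :
    Differentiable ℝ (fun t =>
        x t ⬝ᵥ Q.mulVec (x t) + e t ⬝ᵥ P.mulVec (e t) + ε t ⬝ᵥ P.mulVec (ε t)) ∧
      (∀ t, deriv (fun t =>
        x t ⬝ᵥ Q.mulVec (x t) + e t ⬝ᵥ P.mulVec (e t) + ε t ⬝ᵥ P.mulVec (ε t)) t ≤ 0) ∧
      (∀ t, (x t, e t, ε t) ≠ (0, 0, 0) →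
        deriv (fun t =>
          x t ⬝ᵥ Q.mulVec (x t) + e t ⬝ᵥ P.mulVec (e t) + ε t ⬝ᵥ P.mulVec (ε t)) t < 0) :=
  stmt9_general A B K Kbar Abar P E hPsymm hPpos hE Q hQsymm C N₁ N₂ Bfbar Cω H₁ H₂ H₃ L hL Lc hLc Ξ
    hΞ hNegDef hH₁ hH₂ hH₃ c η ρ ωb hη hρ x hx e ε he hε d ω hd hω hxdyn hedyn hεdyn
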